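/- arXiv:0704.1164 — 4 statements merged into one kernel-verified Lean document; each statement's English description precedes it below -/
import Mathlib

section
/- Let μ be a Borel probability measure on ℝ, let L be a positive integer, and let y be a real number with y > L. Assume that for every integer k with 0 < k < y and every Borel set I ⊆ (0,∞) one has μ(k + I) ≥ μ(k − I), where k + I = {k + s : s ∈ I} and k − I = {k − s : s ∈ I}. Then μ((−L, L)) ≤ ⌈y/L⌉^{−1}. -/
open MeasureTheory Set Function

/-! Reflection across `k = jL` maps `((j-1)L, (j+1)L) ⊆ (0, ∞)` onto `(-L, L)` on one side and
onto `((2j-1)L, (2j+1)L)` on the other, so each of the `⌈y/L⌉` pairwise disjoint intervals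
`((2j-1)L, (2j+1)L)`, `0 ≤ j < ⌈y/L⌉`, carries at least the mass of `(-L, L)`. -/

theorem MeasureTheory.card_mul_measure_le_measure_univ {α ι : Type*} [MeasurableSpace α]
    (μ : Measure α) {s : Finset ι} {t : ι → Set α} {A : Set α}
    (ht : ∀ i ∈ s, MeasurableSet (t i)) (hdisj : (s : Set ι).Pairwise (Disjoint on t))
    (hA : ∀ i ∈ s, μ A ≤ μ (t i)) :
    s.card * μ A ≤ μ univ :=
  calc (s.card : ENNReal) * μ A = ∑ _ ∈ s, μ A := by rw [Finset.sum_const, nsmul_eq_mul]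
    _ ≤ ∑ i ∈ s, μ (t i) := Finset.sum_le_sum hA
    _ ≤ μ univ := sum_measure_le_measure_univ (fun i hi => (ht i hi).nullMeasurableSet)
        fun _ hi _ hj hij => (hdisj hi hj hij).aedisjoint

theorem Set.pairwise_disjoint_Ioo_two_mul_natCast_mul {α : Type*} [CommRing α] [PartialOrder α]
    [IsOrderedRing α] (r : α) :
    Pairwise (Disjoint on fun j : ℕ => Ioo (2 * j * r - r) (2 * j * r + r)) := by
  have h := (pairwise_disjoint_Ioo_add_zsmul (-r) (2 * r)).comp_of_injective
    (Nat.cast_injective (R := ℤ))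
  convert h using 3 with j
  simp only [zsmul_eq_mul]
  push_cast
  congr 1 <;> ring

theorem MeasureTheory.measure_Ioo_le_of_reflect {μ : Measure ℝ} {a r : ℝ}
    (h : μ ((fun s => a - s) '' Ioo (a - r) (a + r)) ≤
      μ ((fun s => a + s) '' Ioo (a - r) (a + r))) :
    μ (Ioo (-r) r) ≤ μ (Ioo (2 * a - r) (2 * a + r)) := by
  rw [image_const_sub_Ioo, image_const_add_Ioo] at h
  convert h using 2 <;> congr 1 <;> ring

/-- Measure-theoretic core of Lemma 2.1(iii): if a Borel probability measure `μ` on `ℝ`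
satisfies the reflection-domination property `μ(k + I) ≥ μ(k − I)` for every integer
`0 < k < y` and every Borel `I ⊆ (0,∞)`, and `y > L`, then `μ((−L,L)) ≤ ⌈y/L⌉⁻¹`. -/
theorem stmt0 (μ : Measure ℝ) [IsProbabilityMeasure μ] (L : ℕ) (hL : 0 < L)
    (y : ℝ) (hy : (L : ℝ) < y)
    (hsym : ∀ k : ℤ, 0 < k → (k : ℝ) < y → ∀ I : Set ℝ, MeasurableSet I → I ⊆ Ioi 0 →
      μ ((fun s => (k : ℝ) - s) '' I) ≤ μ ((fun s => (k : ℝ) + s) '' I)) :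
    μ (Ioo (-(L : ℝ)) (L : ℝ)) ≤ ENNReal.ofReal ((⌈y / (L : ℝ)⌉ : ℝ)⁻¹) := by
  have hL' : (0 : ℝ) < L := Nat.cast_pos.mpr hL
  have hyL : 0 < y / L := div_pos (hL'.trans hy) hL'
  have hdom : ∀ j ∈ Finset.range ⌈y / L⌉₊,
      μ (Ioo (-(L : ℝ)) L) ≤ μ (Ioo (2 * j * L - L) (2 * j * L + L)) := by
    intro j hj
    rcases j.eq_zero_or_pos with rfl | hj0
    · simp
    have hjy : (j : ℝ) * L < y := (lt_div_iff₀ hL').mp (Nat.lt_ceil.mp (Finset.mem_range.mp hj))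
    have hpos : Ioo ((j : ℝ) * L - L) (j * L + L) ⊆ Ioi 0 := fun x hx =>
      lt_of_le_of_lt (by nlinarith [(Nat.one_le_cast (α := ℝ)).mpr hj0]) hx.1
    have h := hsym (j * L) (by positivity) (by push_cast; exact hjy) _ measurableSet_Ioo hpos
    push_cast at h
    simpa only [mul_assoc] using measure_Ioo_le_of_reflect h
  have hcard := card_mul_measure_le_measure_univ μ (fun _ _ => measurableSet_Ioo)
    ((pairwise_disjoint_Ioo_two_mul_natCast_mul (L : ℝ)).set_pairwise _) hdom
  rw [Finset.card_range, measure_univ, mul_comm, ← ENNReal.le_inv_iff_mul_le] at hcard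
  rwa [← natCast_ceil_eq_intCast_ceil hyL.le, ENNReal.ofReal_inv_of_pos (by positivity),
    ENNReal.ofReal_natCast]
end

section
/- Let A ∈ ℝ, let u : ℝ² → ℝ² and g : ℝ → ℝ be functions, let φ : ℝ × ℝ² → ℝ and w : ℝ × ℝ → ℝ be twice continuously differentiable, and assume: (a) ∂_t φ(t,x) + A·u(x)·∇_x φ(t,x) = Δ_x φ(t,x) for all (t,x); (b) ∂_t w(t,s) = g(w(t,s)) for all (t,s); (c) ∂²w/∂s²(t,s) ≥ 0 for all (t,s). Then the function ψ(t,x) := w(t, φ(t,x)) satisfies the differential inequality ∂_t ψ(t,x) + A·u(x)·∇_x ψ(t,x) ≤ Δ_x ψ(t,x) + g(ψ(t,x)) at every point (t,x) ∈ ℝ × ℝ². -/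
/-!
By the chain rule, `ψ = w(t, φ)` has `ψ_t = w_t + w_s φ_t`, `∇ψ = w_s ∇φ` and
`Δψ = w_s Δφ + w_ss |∇φ|²`. With `w_t = g(w)` this gives
`ψ_t + A u·∇ψ - Δψ - g(ψ) = w_s (φ_t + A u·∇φ - Δφ) - w_ss |∇φ|²`,
where the first term vanishes by the equation for `φ` and the second is `≤ 0` by convexity of `w`.
-/

/-- Time derivative `∂_t φ` of a function `φ = φ(t, x₁, x₂)`. -/
noncomputable def pdt (φ : ℝ → ℝ → ℝ → ℝ) (t x₁ x₂ : ℝ) : ℝ :=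
  deriv (fun s => φ s x₁ x₂) t

/-- First spatial partial derivative `∂_{x₁} φ`. -/
noncomputable def pd1 (φ : ℝ → ℝ → ℝ → ℝ) (t x₁ x₂ : ℝ) : ℝ :=
  deriv (fun a => φ t a x₂) x₁

/-- Second spatial partial derivative `∂_{x₂} φ`. -/
noncomputable def pd2 (φ : ℝ → ℝ → ℝ → ℝ) (t x₁ x₂ : ℝ) : ℝ :=
  deriv (fun b => φ t x₁ b) x₂

/-- Spatial Laplacian `Δ_x φ = ∂²_{x₁} φ + ∂²_{x₂} φ`. -/
noncomputable def plap (φ : ℝ → ℝ → ℝ → ℝ) (t x₁ x₂ : ℝ) : ℝ :=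
  deriv (fun a => deriv (fun a' => φ t a' x₂) a) x₁ +
    deriv (fun b => deriv (fun b' => φ t x₁ b') b) x₂

theorem deriv_deriv_comp {h f : ℝ → ℝ} (hh : ContDiff ℝ 2 h) (hf : ContDiff ℝ 2 f) (x : ℝ) :
    deriv (deriv fun a => h (f a)) x =
      deriv (deriv h) (f x) * deriv f x ^ 2 + deriv h (f x) * deriv (deriv f) x := by
  have hd : deriv (fun a => h (f a)) = fun a => deriv h (f a) * deriv f a :=
    funext fun a => deriv_comp a (hh.differentiable two_ne_zero _) (hf.differentiable two_ne_zero a)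
  rw [hd]
  exact (((hh.differentiable_deriv_two _).hasDerivAt.comp x
    (hf.differentiable two_ne_zero x).hasDerivAt).fun_mul
      (hf.differentiable_deriv_two x).hasDerivAt).deriv.trans (by rw [Function.comp_apply]; ring)

theorem hasDerivAt_comp_graph {w : ℝ → ℝ → ℝ} {f : ℝ → ℝ} {t f' : ℝ}
    (hw : DifferentiableAt ℝ (fun p : ℝ × ℝ => w p.1 p.2) (t, f t)) (hf : HasDerivAt f f' t) :
    HasDerivAt (fun s => w s (f s)) (deriv (fun τ => w τ (f t)) t + deriv (w t) (f t) * f') t := by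
  set L := fderiv ℝ (fun p : ℝ × ℝ => w p.1 p.2) (t, f t)
  have hL : HasFDerivAt (fun p : ℝ × ℝ => w p.1 p.2) L (t, f t) := hw.hasFDerivAt
  have hτ : HasDerivAt (fun τ => w τ (f t)) (L (1, 0)) t :=
    (hL.comp_hasDerivAt t ((hasDerivAt_id' t).prodMk (hasDerivAt_const t (f t))) :)
  have hσ : HasDerivAt (w t) (L (0, 1)) (f t) :=
    (hL.comp_hasDerivAt (f t) ((hasDerivAt_const (f t) t).prodMk (hasDerivAt_id' (f t))) :)
  have hsplit : ((1 : ℝ), f') = (1, 0) + f' • (0, 1) := by simp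
  rw [hτ.deriv, hσ.deriv, mul_comm, ← smul_eq_mul, ← map_smul, ← map_add, ← hsplit]
  exact (hL.comp_hasDerivAt t ((hasDerivAt_id' t).prodMk hf) :)

section Composition

variable {w : ℝ → ℝ → ℝ} {φ : ℝ → ℝ → ℝ → ℝ} {t x₁ x₂ : ℝ}

theorem pdt_comp (hw : DifferentiableAt ℝ (fun p : ℝ × ℝ => w p.1 p.2) (t, φ t x₁ x₂))
    (hφ : DifferentiableAt ℝ (fun s => φ s x₁ x₂) t) :
    pdt (fun t x₁ x₂ => w t (φ t x₁ x₂)) t x₁ x₂ =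
      deriv (fun τ => w τ (φ t x₁ x₂)) t + deriv (w t) (φ t x₁ x₂) * pdt φ t x₁ x₂ :=
  (hasDerivAt_comp_graph hw hφ.hasDerivAt).deriv

theorem pd1_comp (hw : DifferentiableAt ℝ (w t) (φ t x₁ x₂))
    (hφ : DifferentiableAt ℝ (fun a => φ t a x₂) x₁) :
    pd1 (fun t x₁ x₂ => w t (φ t x₁ x₂)) t x₁ x₂ = deriv (w t) (φ t x₁ x₂) * pd1 φ t x₁ x₂ :=
  deriv_comp x₁ hw hφ

theorem pd2_comp (hw : DifferentiableAt ℝ (w t) (φ t x₁ x₂))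
    (hφ : DifferentiableAt ℝ (fun b => φ t x₁ b) x₂) :
    pd2 (fun t x₁ x₂ => w t (φ t x₁ x₂)) t x₁ x₂ = deriv (w t) (φ t x₁ x₂) * pd2 φ t x₁ x₂ :=
  deriv_comp x₂ hw hφ

theorem plap_comp (hw : ContDiff ℝ 2 (w t)) (h₁ : ContDiff ℝ 2 fun a => φ t a x₂)
    (h₂ : ContDiff ℝ 2 fun b => φ t x₁ b) :
    plap (fun t x₁ x₂ => w t (φ t x₁ x₂)) t x₁ x₂ =
      deriv (deriv (w t)) (φ t x₁ x₂) * (pd1 φ t x₁ x₂ ^ 2 + pd2 φ t x₁ x₂ ^ 2) +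
        deriv (w t) (φ t x₁ x₂) * plap φ t x₁ x₂ := by
  rw [plap, plap, deriv_deriv_comp hw h₁, deriv_deriv_comp hw h₂, pd1, pd2]
  ring

end Composition

/-- Subsolution construction from the proof of Lemma 3.2: if `φ` solves the
advection-diffusion equation `φ_t + A·u·∇φ = Δφ`, and `w = w(t,s)` satisfies
`w_t = g(w)` and `w_{ss} ≥ 0`, then `ψ(t,x) := w(t, φ(t,x))` satisfies
`ψ_t + A·u·∇ψ ≤ Δψ + g(ψ)`. -/
theorem stmt8 (A : ℝ) (u : ℝ × ℝ → ℝ × ℝ) (g : ℝ → ℝ)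
    (φ : ℝ → ℝ → ℝ → ℝ) (hφ : ContDiff ℝ 2 (fun p : ℝ × ℝ × ℝ => φ p.1 p.2.1 p.2.2))
    (w : ℝ → ℝ → ℝ) (hw : ContDiff ℝ 2 (fun p : ℝ × ℝ => w p.1 p.2))
    (ha : ∀ t x₁ x₂, pdt φ t x₁ x₂ +
      A * ((u (x₁, x₂)).1 * pd1 φ t x₁ x₂ + (u (x₁, x₂)).2 * pd2 φ t x₁ x₂) = plap φ t x₁ x₂)
    (hb : ∀ t s, deriv (fun t' => w t' s) t = g (w t s))
    (hc : ∀ t s, 0 ≤ deriv (fun s' => deriv (fun s'' => w t s'') s') s)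
    (ψ : ℝ → ℝ → ℝ → ℝ) (hψ : ∀ t x₁ x₂, ψ t x₁ x₂ = w t (φ t x₁ x₂)) :
    ∀ t x₁ x₂, pdt ψ t x₁ x₂ +
        A * ((u (x₁, x₂)).1 * pd1 ψ t x₁ x₂ + (u (x₁, x₂)).2 * pd2 ψ t x₁ x₂) ≤
      plap ψ t x₁ x₂ + g (ψ t x₁ x₂) := by
  intro t x₁ x₂
  obtain rfl : ψ = fun t x₁ x₂ => w t (φ t x₁ x₂) :=
    funext fun t => funext fun x₁ => funext (hψ t x₁)
  have hwt : ContDiff ℝ 2 (w t) := hw.comp (contDiff_const.prodMk contDiff_id)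
  have hφt : ContDiff ℝ 2 fun s => φ s x₁ x₂ :=
    hφ.comp (by fun_prop : ContDiff ℝ 2 fun s : ℝ => (s, x₁, x₂))
  have hφ₁ : ContDiff ℝ 2 fun a => φ t a x₂ :=
    hφ.comp (by fun_prop : ContDiff ℝ 2 fun a : ℝ => (t, a, x₂))
  have hφ₂ : ContDiff ℝ 2 fun b => φ t x₁ b :=
    hφ.comp (by fun_prop : ContDiff ℝ 2 fun b : ℝ => (t, x₁, b))
  have hws : DifferentiableAt ℝ (w t) (φ t x₁ x₂) := hwt.differentiable two_ne_zero _
  rw [pdt_comp (hw.differentiable two_ne_zero _) (hφt.differentiable two_ne_zero t), hb,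
    pd1_comp hws (hφ₁.differentiable two_ne_zero x₁),
    pd2_comp hws (hφ₂.differentiable two_ne_zero x₂), plap_comp hwt hφ₁ hφ₂]
  have hwss : 0 ≤ deriv (deriv (w t)) (φ t x₁ x₂) := hc t _
  have hgrad : 0 ≤ pd1 φ t x₁ x₂ ^ 2 + pd2 φ t x₁ x₂ ^ 2 := by positivity
  linear_combination deriv (w t) (φ t x₁ x₂) * ha t x₁ x₂ + mul_nonneg hwss hgrad
end

section
/- Let K ≥ 0 and let g : ℝ → ℝ be convex and K-Lipschitz. Let τ > 0, λ ∈ [0,1], and let y₁, y₂, y₃ : [0,τ] → ℝ be differentiable functions satisfying y_i'(t) = g(y_i(t)) for all t ∈ [0,τ] and i = 1,2,3, with y₃(0) = λ·y₁(0) + (1−λ)·y₂(0). Then y₃(t) ≤ λ·y₁(t) + (1−λ)·y₂(t) for all t ∈ [0,τ]. -/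
/-!
Put `v = y₃ - (λ y₁ + (1 - λ) y₂)`, so `v 0 = 0`. By convexity
`λ g(y₁) + (1 - λ) g(y₂) ≥ g(λ y₁ + (1 - λ) y₂)`, and by the Lipschitz bound
`v' ≤ g(y₃) - g(λ y₁ + (1 - λ) y₂) ≤ K |v|`. Hence `v` never crosses a barrier `δ e^{(K+1)t}`
with `δ > 0`, which grows strictly faster than `v` wherever the two meet; letting `δ → 0` gives
`v ≤ 0`.
-/

open Set Real

theorem nonpos_of_hasDerivWithinAt_le_mul_of_pos {f f' : ℝ → ℝ} {a b K : ℝ}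
    (hf : ContinuousOn f (Icc a b))
    (hf' : ∀ x ∈ Ico a b, HasDerivWithinAt f (f' x) (Ici x) x) (ha : f a ≤ 0)
    (bound : ∀ x ∈ Ico a b, 0 < f x → f' x ≤ K * f x) :
    ∀ ⦃x⦄, x ∈ Icc a b → f x ≤ 0 := by
  intro x hx
  refine le_of_forall_pos_le_add fun δ hδ => ?_
  set B : ℝ → ℝ := fun t => δ * exp ((K + 1) * (t - x))
  have hB_pos : ∀ t, 0 < B t := fun t => mul_pos hδ (exp_pos _)
  have hB_deriv : ∀ t, HasDerivAt B ((K + 1) * B t) t := fun t =>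
    ((((hasDerivAt_id' t).sub_const x).const_mul (K + 1)).exp.const_mul δ).congr_deriv
      (by simp only [B]; ring)
  have hfB : f x ≤ B x :=
    image_le_of_deriv_right_lt_deriv_boundary' hf hf' (ha.trans (hB_pos a).le)
      (fun t _ => (hB_deriv t).continuousAt.continuousWithinAt)
      (fun t _ => (hB_deriv t).hasDerivWithinAt)
      (fun t ht hft => by
        have := bound t ht (hft ▸ hB_pos t)
        rw [hft] at this
        linarith [hB_pos t]) hx
  simpa [B] using hfB

theorem ConvexOn.sub_convex_combination_le_of_lipschitzWith {g : ℝ → ℝ} {K : NNReal}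
    (hconv : ConvexOn ℝ univ g) (hlip : LipschitzWith K g) {lam : ℝ} (hlam0 : 0 ≤ lam)
    (hlam1 : lam ≤ 1) (a b c : ℝ) :
    g c - (lam * g a + (1 - lam) * g b) ≤ K * |c - (lam * a + (1 - lam) * b)| := by
  have hjensen : g (lam * a + (1 - lam) * b) ≤ lam * g a + (1 - lam) * g b :=
    hconv.2 (mem_univ a) (mem_univ b) hlam0 (sub_nonneg.2 hlam1) (by ring)
  have hlipschitz : g c - g (lam * a + (1 - lam) * b) ≤ K * |c - (lam * a + (1 - lam) * b)| := by
    simpa only [← Real.dist_eq] using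
      (le_abs_self _).trans (hlip.dist_le_mul c (lam * a + (1 - lam) * b))
  linarith

theorem stmt9_general (K : ℝ) (g : ℝ → ℝ)
    (hconv : ConvexOn ℝ Set.univ g) (hlip : LipschitzWith (Real.toNNReal K) g)
    (τ : ℝ) (lam : ℝ) (hlam0 : 0 ≤ lam) (hlam1 : lam ≤ 1)
    (y₁ y₂ y₃ : ℝ → ℝ)
    (h₁ : ∀ t ∈ Set.Icc (0 : ℝ) τ, HasDerivAt y₁ (g (y₁ t)) t)
    (h₂ : ∀ t ∈ Set.Icc (0 : ℝ) τ, HasDerivAt y₂ (g (y₂ t)) t)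
    (h₃ : ∀ t ∈ Set.Icc (0 : ℝ) τ, HasDerivAt y₃ (g (y₃ t)) t)
    (h0 : y₃ 0 = lam * y₁ 0 + (1 - lam) * y₂ 0) :
    ∀ t ∈ Set.Icc (0 : ℝ) τ, y₃ t ≤ lam * y₁ t + (1 - lam) * y₂ t := by
  set v : ℝ → ℝ := fun t => y₃ t - (lam * y₁ t + (1 - lam) * y₂ t)
  have hv : ∀ t ∈ Icc 0 τ,
      HasDerivAt v (g (y₃ t) - (lam * g (y₁ t) + (1 - lam) * g (y₂ t))) t := fun t ht =>
    (h₃ t ht).sub (((h₁ t ht).const_mul lam).add ((h₂ t ht).const_mul (1 - lam)))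
  have hv_bound : ∀ s ∈ Ico 0 τ, 0 < v s →
      g (y₃ s) - (lam * g (y₁ s) + (1 - lam) * g (y₂ s)) ≤ K.toNNReal * v s := fun s _ hpos => by
    simpa [v, abs_of_pos hpos] using
      hconv.sub_convex_combination_le_of_lipschitzWith hlip hlam0 hlam1 (y₁ s) (y₂ s) (y₃ s)
  intro t ht
  exact sub_nonpos.1 <| nonpos_of_hasDerivWithinAt_le_mul_of_pos
    (fun s hs => (hv s hs).continuousAt.continuousWithinAt)
    (fun s hs => (hv s (Ico_subset_Icc_self hs)).hasDerivWithinAt) (by simp [v, h0]) hv_bound ht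

/-- Convexity in initial data of the flow of `y' = g(y)` for convex Lipschitz `g`
(the claim `w_s, w_{ss} ≥ 0` in the proof of Lemma 3.2): if `y₁, y₂, y₃` solve the ODE on
`[0,τ]` and `y₃(0) = λ·y₁(0) + (1−λ)·y₂(0)`, then `y₃(t) ≤ λ·y₁(t) + (1−λ)·y₂(t)` on `[0,τ]`. -/
theorem stmt9 (K : ℝ) (hK : 0 ≤ K) (g : ℝ → ℝ)
    (hconv : ConvexOn ℝ Set.univ g) (hlip : LipschitzWith (Real.toNNReal K) g)
    (τ : ℝ) (hτ : 0 < τ) (lam : ℝ) (hlam0 : 0 ≤ lam) (hlam1 : lam ≤ 1)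
    (y₁ y₂ y₃ : ℝ → ℝ)
    (h₁ : ∀ t ∈ Set.Icc (0 : ℝ) τ, HasDerivAt y₁ (g (y₁ t)) t)
    (h₂ : ∀ t ∈ Set.Icc (0 : ℝ) τ, HasDerivAt y₂ (g (y₂ t)) t)
    (h₃ : ∀ t ∈ Set.Icc (0 : ℝ) τ, HasDerivAt y₃ (g (y₃ t)) t)
    (h0 : y₃ 0 = lam * y₁ 0 + (1 - lam) * y₂ 0) :
    ∀ t ∈ Set.Icc (0 : ℝ) τ, y₃ t ≤ lam * y₁ t + (1 - lam) * y₂ t :=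
  stmt9_general K g hconv hlip τ lam hlam0 hlam1 y₁ y₂ y₃ h₁ h₂ h₃ h0
end

section
/- Let g : ℝ → ℝ be a measurable function such that s ↦ g(s) − χ_{(−∞,0)}(s) is Lebesgue integrable on ℝ. Then the function s ↦ g(s−1) − g(s) is Lebesgue integrable on ℝ and ∫_ℝ (g(s−1) − g(s)) ds = 1. -/
/-!
Write `g = h + c·χ_{(-∞,0)}` with `h` integrable. The difference `h(s - a) - h(s)` integrates to
zero by translation invariance of Lebesgue measure, while the shifted step functions differ by
`c·χ_{[0,a)}`, which integrates to `a • c`.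
-/

open MeasureTheory Set

theorem integral_comp_sub_right_sub_eq_zero {G E : Type*} [MeasurableSpace G] [AddGroup G]
    [MeasurableAdd G] [NormedAddCommGroup E] [NormedSpace ℝ E] {μ : Measure G}
    [μ.IsAddRightInvariant] {f : G → E} (hf : Integrable f μ) (g : G) :
    ∫ x, (f (x - g) - f x) ∂μ = 0 := by
  rw [integral_sub (hf.comp_sub_right g) hf, integral_sub_right_eq_self, sub_self]

theorem indicator_Iio_comp_sub_sub_indicator_Iio {M : Type*} [AddGroup M] {a : ℝ} (ha : 0 ≤ a)
    (c : M) (s : ℝ) :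
    (Iio 0).indicator (fun _ => c) (s - a) - (Iio 0).indicator (fun _ => c) s =
      (Ico 0 a).indicator (fun _ => c) s := by
  by_cases hs : s < 0
  · simp [indicator, hs, show s - a < 0 by linarith, not_le.2 hs]
  · by_cases hsa : s < a <;> simp [indicator, hs, hsa, not_lt.1 hs]

theorem comp_sub_sub_eq_of_sub_indicator_Iio {E : Type*} [AddCommGroup E] (g : ℝ → E) (c : E)
    {a : ℝ} (ha : 0 ≤ a) :
    (fun s => g (s - a) - g s) =
      fun s => ((g (s - a) - (Iio 0).indicator (fun _ => c) (s - a)) -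
        (g s - (Iio 0).indicator (fun _ => c) s)) + (Ico 0 a).indicator (fun _ => c) s := by
  ext s
  rw [← indicator_Iio_comp_sub_sub_indicator_Iio ha]
  abel

section StepProfile

variable {E : Type*} [NormedAddCommGroup E] {g : ℝ → E} {c : E} {a : ℝ}

theorem integrable_comp_sub_sub_of_integrable_sub_indicator_Iio (ha : 0 ≤ a)
    (hg : Integrable fun s => g s - (Iio 0).indicator (fun _ => c) s) :
    Integrable fun s => g (s - a) - g s := by
  rw [comp_sub_sub_eq_of_sub_indicator_Iio g c ha]
  exact ((hg.comp_sub_right a).sub hg).add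
    ((integrableOn_const (by simp)).integrable_indicator measurableSet_Ico)

theorem integral_comp_sub_sub_of_integrable_sub_indicator_Iio [NormedSpace ℝ E] [CompleteSpace E]
    (ha : 0 ≤ a) (hg : Integrable fun s => g s - (Iio 0).indicator (fun _ => c) s) :
    ∫ s, (g (s - a) - g s) = a • c := by
  have hdiff : Integrable fun s => (g (s - a) - (Iio 0).indicator (fun _ => c) (s - a)) -
      (g s - (Iio 0).indicator (fun _ => c) s) := (hg.comp_sub_right a).sub hg
  have hshift := integral_comp_sub_right_sub_eq_zero hg a
  beta_reduce at hshift
  rw [comp_sub_sub_eq_of_sub_indicator_Iio g c ha, integral_add hdiff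
      ((integrableOn_const (by simp)).integrable_indicator measurableSet_Ico),
    hshift, integral_indicator_const _ measurableSet_Ico, Real.volume_real_Ico_of_le ha,
    sub_zero, zero_add]

end StepProfile

theorem stmt13_general (g : ℝ → ℝ)
    (hint : Integrable (fun s : ℝ => g s - if s < 0 then 1 else 0)) :
    Integrable (fun s : ℝ => g (s - 1) - g s) ∧
      ∫ s : ℝ, (g (s - 1) - g s) = 1 := by
  have hg : Integrable fun s => g s - (Iio 0).indicator (fun _ => (1 : ℝ)) s := by
    simpa only [indicator, mem_Iio] using hint
  refine ⟨integrable_comp_sub_sub_of_integrable_sub_indicator_Iio zero_le_one hg, ?_⟩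
  rw [integral_comp_sub_sub_of_integrable_sub_indicator_Iio zero_le_one hg, smul_eq_mul, one_mul]

/-- Telescoping identity from the proof of Lemma 4.1: if `g − χ_{(−∞,0)}` is integrable
on `ℝ`, then `s ↦ g(s−1) − g(s)` is integrable and `∫ (g(s−1) − g(s)) ds = 1`. -/
theorem stmt13 (g : ℝ → ℝ) (hmeas : Measurable g)
    (hint : Integrable (fun s : ℝ => g s - if s < 0 then 1 else 0)) :
    Integrable (fun s : ℝ => g (s - 1) - g s) ∧
      ∫ s : ℝ, (g (s - 1) - g s) = 1 :=
  stmt13_general g hint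
end
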